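/- arXiv:1808.08574 — 2 statements merged into one kernel-verified Lean document; each statement's English description precedes it below -/
import Mathlib

section
/- Let T ∈ (0,∞) and let φ : {(t,s) : 0 ≤ s ≤ t ≤ T} → [0,∞) be Borel measurable with ∫_s^T φ(r,s) dr < ∞ for all s ∈ [0,T]. Suppose there exist constants A, B ∈ [0,∞) and α, β ∈ (0,∞) such that φ(t,s) ≤ A (t-s)^{α-1} + B ∫_s^t (t-r)^{β-1} φ(r,s) dr for all 0 ≤ s ≤ t ≤ T. Then there exists a constant C = C(B,T,α,β) ∈ [0,∞) such that φ(t,s) ≤ C A (t-s)^{α-1} for all 0 ≤ s ≤ t ≤ T. -/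
/-!
Fix `s` and work with `ψ = φ(·, s)` in `ℝ≥0∞`, where every integral is defined. Writing `I^γ`
for the Riemann–Liouville integral from `s` (without `1 / Γ(γ)`), the hypothesis reads
`ψ ≤ A (t - s)^(α-1) + B I^β ψ`. The crude Beta bound
`∫ₛᵗ (t - u)^(p-1) (u - s)^(q-1) du ≤ c(p, q) (t - s)^(p+q-1)`, obtained by splitting at the
midpoint, gives `I^ν I^β ≤ c I^(ν+β)` and `I^ν (u - s)^(α-1) ≤ c T^ν (t - s)^(α-1)`; substituting
the hypothesis into itself `n` times with `(n + 1) β ≥ 1` therefore makes the kernel bounded: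
`ψ(t) ≤ C A (t - s)^(α-1) + D ∫ₛᵗ ψ`.

Integrating once more, `F(t) = ∫ₛᵗ ψ` satisfies `F ≤ A (t - s)^α / α + D ∫ₛᵗ F`. Since `ψ` is
integrable, `F` is bounded, so the best constant `M` in `F(u) ≤ M e^(κ (u - s))` is finite, and for
`κ ≥ 2 D` the inequality gives `M ≤ A (t - s)^α / α + M / 2`. Feeding `F(t) ≲ A (t - s)^α`
back into the bounded-kernel inequality gives the claim.
-/

open MeasureTheory Set Function
open scoped ENNReal NNReal

namespace Gronwall

lemma lintegral_Ioc_rpow_sub_left {γ a b : ℝ} (hγ : 0 < γ) (hab : a ≤ b) :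
    ∫⁻ r in Ioc a b, ENNReal.ofReal ((r - a) ^ (γ - 1)) = ENNReal.ofReal ((b - a) ^ γ / γ) := by
  have hint : IntervalIntegrable (fun r : ℝ => (r - a) ^ (γ - 1)) volume a b := by
    simpa using (intervalIntegral.intervalIntegrable_rpow' (a := 0) (b := b - a)
      (by linarith : -1 < γ - 1)).comp_sub_right a
  have hval : ∫ r in a..b, (r - a) ^ (γ - 1) = (b - a) ^ γ / γ := by
    rw [intervalIntegral.integral_comp_sub_right (fun x : ℝ => x ^ (γ - 1)),
      integral_rpow (Or.inl (by linarith))]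
    simp [Real.zero_rpow hγ.ne']
  rw [intervalIntegral.integral_of_le hab] at hval
  rw [← hval, ofReal_integral_eq_lintegral_ofReal hint.1]
  exact (ae_restrict_iff' measurableSet_Ioc).mpr
    (ae_of_all _ fun r hr => Real.rpow_nonneg (by linarith [hr.1]) _)

lemma lintegral_Ioc_rpow_sub_right {γ a b : ℝ} (hγ : 0 < γ) (hab : a ≤ b) :
    ∫⁻ r in Ioc a b, ENNReal.ofReal ((b - r) ^ (γ - 1)) = ENNReal.ofReal ((b - a) ^ γ / γ) := by
  have hint : IntervalIntegrable (fun r : ℝ => (b - r) ^ (γ - 1)) volume a b := by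
    simpa using (intervalIntegral.intervalIntegrable_rpow' (a := b - a) (b := 0)
      (by linarith : -1 < γ - 1)).comp_sub_left b
  have hval : ∫ r in a..b, (b - r) ^ (γ - 1) = (b - a) ^ γ / γ := by
    rw [intervalIntegral.integral_comp_sub_left (fun x : ℝ => x ^ (γ - 1)),
      integral_rpow (Or.inl (by linarith))]
    simp [Real.zero_rpow hγ.ne']
  rw [intervalIntegral.integral_of_le hab] at hval
  rw [← hval, ofReal_integral_eq_lintegral_ofReal hint.1]
  exact (ae_restrict_iff' measurableSet_Ioc).mpr
    (ae_of_all _ fun r hr => Real.rpow_nonneg (by linarith [hr.2]) _)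

lemma rpow_le_two_rpow_abs_mul_rpow {x d : ℝ} (e : ℝ) (hd : 0 < d) (hx : d / 2 ≤ x)
    (hxd : x ≤ d) : x ^ e ≤ 2 ^ |e| * d ^ e := by
  rcases le_total 0 e with he | he
  · calc x ^ e ≤ d ^ e := Real.rpow_le_rpow (by linarith) hxd he
      _ ≤ 2 ^ |e| * d ^ e :=
        le_mul_of_one_le_left (by positivity) (Real.one_le_rpow one_le_two (abs_nonneg e))
  · calc x ^ e ≤ (d / 2) ^ e := Real.rpow_le_rpow_of_nonpos (by linarith) hx he
      _ = 2 ^ |e| * d ^ e := by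
        rw [abs_of_nonpos he, Real.div_rpow hd.le zero_le_two, Real.rpow_neg zero_le_two]
        ring

/-- An upper bound for the Beta function `B(q, p)`. -/
noncomputable def betaBound (p q : ℝ) : ℝ := 2 ^ |p - 1| / q + 2 ^ |q - 1| / p

lemma betaBound_nonneg {p q : ℝ} (hp : 0 < p) (hq : 0 < q) : 0 ≤ betaBound p q := by
  unfold betaBound; positivity

lemma rpow_mul_rpow_le_of_mem_Ioc {p q a b r : ℝ} (hr : r ∈ Ioc a b) :
    ENNReal.ofReal ((b - r) ^ (p - 1)) * ENNReal.ofReal ((r - a) ^ (q - 1)) ≤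
      ENNReal.ofReal (2 ^ |p - 1| * (b - a) ^ (p - 1)) * ENNReal.ofReal ((r - a) ^ (q - 1)) +
      ENNReal.ofReal (2 ^ |q - 1| * (b - a) ^ (q - 1)) * ENNReal.ofReal ((b - r) ^ (p - 1)) := by
  obtain ⟨har, hrb⟩ := hr
  rcases le_total (r - a) ((b - a) / 2) with h | h
  · refine le_add_right (mul_le_mul_left (ENNReal.ofReal_le_ofReal ?_) _)
    exact rpow_le_two_rpow_abs_mul_rpow _ (by linarith) (by linarith) (by linarith)
  · refine le_add_left ((mul_comm _ _).trans_le (mul_le_mul_left (ENNReal.ofReal_le_ofReal ?_) _))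
    exact rpow_le_two_rpow_abs_mul_rpow _ (by linarith) h (by linarith)

lemma lintegral_Ioc_rpow_mul_rpow_le {p q a b : ℝ} (hp : 0 < p) (hq : 0 < q) :
    ∫⁻ r in Ioc a b, ENNReal.ofReal ((b - r) ^ (p - 1)) * ENNReal.ofReal ((r - a) ^ (q - 1)) ≤
      ENNReal.ofReal (betaBound p q * (b - a) ^ (p + q - 1)) := by
  rcases le_or_gt b a with hba | hab
  · simp [Ioc_eq_empty_of_le hba]
  have hd : 0 < b - a := by linarith
  have hmeas : Measurable fun r : ℝ => ENNReal.ofReal ((r - a) ^ (q - 1)) := by fun_prop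
  calc _ ≤ ∫⁻ r in Ioc a b,
          ENNReal.ofReal (2 ^ |p - 1| * (b - a) ^ (p - 1)) * ENNReal.ofReal ((r - a) ^ (q - 1)) +
          ENNReal.ofReal (2 ^ |q - 1| * (b - a) ^ (q - 1)) * ENNReal.ofReal ((b - r) ^ (p - 1)) :=
        setLIntegral_mono' measurableSet_Ioc fun r hr => rpow_mul_rpow_le_of_mem_Ioc hr
    _ = ENNReal.ofReal (2 ^ |p - 1| * (b - a) ^ (p - 1)) * ENNReal.ofReal ((b - a) ^ q / q) +
          ENNReal.ofReal (2 ^ |q - 1| * (b - a) ^ (q - 1)) * ENNReal.ofReal ((b - a) ^ p / p) := by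
        rw [lintegral_add_left (hmeas.const_mul _), lintegral_const_mul _ hmeas,
          lintegral_const_mul' _ _ ENNReal.ofReal_ne_top, lintegral_Ioc_rpow_sub_left hq hab.le,
          lintegral_Ioc_rpow_sub_right hp hab.le]
    _ = ENNReal.ofReal (betaBound p q * (b - a) ^ (p + q - 1)) := by
        rw [← ENNReal.ofReal_mul (by positivity), ← ENNReal.ofReal_mul (by positivity),
          ← ENNReal.ofReal_add (by positivity) (by positivity)]
        congr 1
        rw [betaBound, add_mul]
        congr 1
        · rw [show p + q - 1 = (p - 1) + q by ring, Real.rpow_add hd]; ring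
        · rw [show p + q - 1 = (q - 1) + p by ring, Real.rpow_add hd]; ring

lemma lintegral_Ioc_lintegral_Ioc_swap {a b : ℝ} {f : ℝ → ℝ → ℝ≥0∞}
    (hf : Measurable (uncurry f)) :
    ∫⁻ t in Ioc a b, ∫⁻ r in Ioc a t, f t r = ∫⁻ r in Ioc a b, ∫⁻ t in Icc r b, f t r := by
  set S : Set (ℝ × ℝ) := {p | p.2 ≤ p.1}
  have hS : MeasurableSet S := measurableSet_le measurable_snd measurable_fst
  calc ∫⁻ t in Ioc a b, ∫⁻ r in Ioc a t, f t r
      = ∫⁻ t in Ioc a b, ∫⁻ r in Ioc a b, S.indicator (uncurry f) (t, r) := by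
        refine setLIntegral_congr_fun measurableSet_Ioc fun t ht => ?_
        have hset : Iic t ∩ Ioc a b = Ioc a t := by
          ext r; simp only [mem_inter_iff, mem_Iic, mem_Ioc]; grind [ht.2]
        change _ = ∫⁻ r in Ioc a b, (Iic t).indicator (f t) r
        rw [setLIntegral_indicator measurableSet_Iic, hset]
    _ = ∫⁻ r in Ioc a b, ∫⁻ t in Ioc a b, S.indicator (uncurry f) (t, r) :=
        lintegral_lintegral_swap (hf.indicator hS).aemeasurable
    _ = ∫⁻ r in Ioc a b, ∫⁻ t in Icc r b, f t r := by
        refine setLIntegral_congr_fun measurableSet_Ioc fun r hr => ?_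
        have hset : Ici r ∩ Ioc a b = Icc r b := by
          ext t; simp only [mem_inter_iff, mem_Ici, mem_Ioc, mem_Icc]; grind [hr.1]
        change ∫⁻ t in Ioc a b, (Ici r).indicator (fun t => f t r) t = _
        rw [setLIntegral_indicator measurableSet_Ici, hset]

/-- The Riemann–Liouville integral of order `γ` with base point `a`, without the factor
`1 / Γ(γ)`. -/
noncomputable def rlIntegral (γ a : ℝ) (f : ℝ → ℝ≥0∞) (t : ℝ) : ℝ≥0∞ :=
  ∫⁻ r in Ioc a t, ENNReal.ofReal ((t - r) ^ (γ - 1)) * f r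

lemma rlIntegral_mono_on {γ a t : ℝ} {f g : ℝ → ℝ≥0∞} (h : ∀ r ∈ Ioc a t, f r ≤ g r) :
    rlIntegral γ a f t ≤ rlIntegral γ a g t :=
  setLIntegral_mono' measurableSet_Ioc fun r hr => mul_le_mul_right (h r hr) _

lemma rlIntegral_const_mul_add {γ a t : ℝ} {f g : ℝ → ℝ≥0∞} (c : ℝ≥0∞) {d : ℝ≥0∞}
    (hd : d ≠ ∞) (hf : Measurable f) :
    rlIntegral γ a (fun r => c * f r + d * g r) t =
      c * rlIntegral γ a f t + d * rlIntegral γ a g t := by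
  simp only [rlIntegral, mul_add, mul_left_comm _ c, mul_left_comm _ d]
  rw [lintegral_add_left (by fun_prop), lintegral_const_mul _ (by fun_prop),
    lintegral_const_mul' _ _ hd]

lemma rlIntegral_rlIntegral_le {γ δ a t : ℝ} {f : ℝ → ℝ≥0∞} (hγ : 0 < γ) (hδ : 0 < δ)
    (hf : Measurable f) :
    rlIntegral γ a (rlIntegral δ a f) t ≤
      ENNReal.ofReal (betaBound γ δ) * rlIntegral (γ + δ) a f t := by
  calc rlIntegral γ a (rlIntegral δ a f) t
      = ∫⁻ u in Ioc a t, ∫⁻ r in Ioc a u,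
          ENNReal.ofReal ((t - u) ^ (γ - 1)) * ENNReal.ofReal ((u - r) ^ (δ - 1)) * f r := by
        simp only [rlIntegral, mul_assoc]
        exact lintegral_congr fun u => (lintegral_const_mul' _ _ ENNReal.ofReal_ne_top).symm
    _ = ∫⁻ r in Ioc a t, (∫⁻ u in Ioc r t,
          ENNReal.ofReal ((t - u) ^ (γ - 1)) * ENNReal.ofReal ((u - r) ^ (δ - 1))) * f r := by
        rw [lintegral_Ioc_lintegral_Ioc_swap (by fun_prop)]
        refine lintegral_congr fun r => ?_
        rw [← setLIntegral_congr Ioc_ae_eq_Icc, lintegral_mul_const _ (by fun_prop)]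
    _ ≤ ∫⁻ r in Ioc a t, ENNReal.ofReal (betaBound γ δ * (t - r) ^ (γ + δ - 1)) * f r :=
        lintegral_mono fun r => mul_le_mul_left (lintegral_Ioc_rpow_mul_rpow_le hγ hδ) _
    _ = ENNReal.ofReal (betaBound γ δ) * rlIntegral (γ + δ) a f t := by
        rw [rlIntegral, ← lintegral_const_mul' _ _ ENNReal.ofReal_ne_top]
        refine lintegral_congr fun r => ?_
        rw [ENNReal.ofReal_mul (betaBound_nonneg hγ hδ), mul_assoc]

lemma rpow_add_sub_one_le {x T ν : ℝ} (α : ℝ) (hx : 0 < x) (hxT : x ≤ T) (hν : 0 ≤ ν) :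
    x ^ (ν + α - 1) ≤ T ^ ν * x ^ (α - 1) := by
  rw [show ν + α - 1 = ν + (α - 1) by ring, Real.rpow_add hx]
  gcongr

section Iteration

variable {α β T a τ : ℝ} {A : ℝ≥0∞} {B : ℝ≥0} {ψ : ℝ → ℝ≥0∞}

lemma le_add_rlIntegral_add_of_le {C D : ℝ≥0∞} {ν : ℝ} (hν : 0 < ν) (hα : 0 < α) (hβ : 0 < β)
    (hψ : Measurable ψ) (hτ : τ ≤ a + T)
    (hbase : ∀ t ∈ Ioc a τ,
      ψ t ≤ A * ENNReal.ofReal ((t - a) ^ (α - 1)) + B * rlIntegral β a ψ t)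
    (hiter : ∀ t ∈ Ioc a τ,
      ψ t ≤ C * A * ENNReal.ofReal ((t - a) ^ (α - 1)) + D * rlIntegral ν a ψ t)
    {t : ℝ} (ht : t ∈ Ioc a τ) :
    ψ t ≤ (C + D * ENNReal.ofReal (betaBound ν α * T ^ ν)) * A *
        ENNReal.ofReal ((t - a) ^ (α - 1)) +
      D * B * ENNReal.ofReal (betaBound ν β) * rlIntegral (ν + β) a ψ t := by
  have hx : 0 < t - a := sub_pos.2 ht.1
  have hxT : t - a ≤ T := by linarith [ht.2]
  have hmid : rlIntegral ν a ψ t ≤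
      A * (ENNReal.ofReal (betaBound ν α * T ^ ν) * ENNReal.ofReal ((t - a) ^ (α - 1))) +
        B * (ENNReal.ofReal (betaBound ν β) * rlIntegral (ν + β) a ψ t) :=
    calc rlIntegral ν a ψ t
        ≤ rlIntegral ν a
            (fun r => A * ENNReal.ofReal ((r - a) ^ (α - 1)) + B * rlIntegral β a ψ r) t :=
          rlIntegral_mono_on fun r hr => hbase r ⟨hr.1, hr.2.trans ht.2⟩
      _ = A * rlIntegral ν a (fun r => ENNReal.ofReal ((r - a) ^ (α - 1))) t +
            B * rlIntegral ν a (rlIntegral β a ψ) t :=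
          rlIntegral_const_mul_add _ ENNReal.coe_ne_top (by fun_prop)
      _ ≤ A * ENNReal.ofReal (betaBound ν α * (t - a) ^ (ν + α - 1)) +
            B * (ENNReal.ofReal (betaBound ν β) * rlIntegral (ν + β) a ψ t) := by
          gcongr
          · exact lintegral_Ioc_rpow_mul_rpow_le hν hα
          · exact rlIntegral_rlIntegral_le hν hβ hψ
      _ ≤ _ := by
          gcongr
          rw [← ENNReal.ofReal_mul (mul_nonneg (betaBound_nonneg hν hα)
            (Real.rpow_nonneg (hx.le.trans hxT) _)), mul_assoc]
          exact ENNReal.ofReal_le_ofReal (mul_le_mul_of_nonneg_left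
            (rpow_add_sub_one_le α hx hxT hν.le) (betaBound_nonneg hν hα))
  calc ψ t ≤ C * A * ENNReal.ofReal ((t - a) ^ (α - 1)) + D * rlIntegral ν a ψ t := hiter t ht
    _ ≤ C * A * ENNReal.ofReal ((t - a) ^ (α - 1)) + D * (_ + _) := by gcongr
    _ = _ := by ring

lemma exists_le_mul_rpow_add_rlIntegral (hα : 0 < α) (hβ : 0 < β) (n : ℕ) :
    ∃ C D : ℝ≥0∞, C ≠ ∞ ∧ D ≠ ∞ ∧ ∀ (a τ : ℝ) (A : ℝ≥0∞) (ψ : ℝ → ℝ≥0∞),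
      Measurable ψ → τ ≤ a + T →
      (∀ t ∈ Ioc a τ, ψ t ≤ A * ENNReal.ofReal ((t - a) ^ (α - 1)) + B * rlIntegral β a ψ t) →
      ∀ t ∈ Ioc a τ, ψ t ≤ C * A * ENNReal.ofReal ((t - a) ^ (α - 1)) +
        D * rlIntegral ((n + 1) * β) a ψ t := by
  induction n with
  | zero =>
    refine ⟨1, B, ENNReal.one_ne_top, ENNReal.coe_ne_top, fun a τ A ψ _ _ hbase t ht => ?_⟩
    simpa using hbase t ht
  | succ n ih =>
    obtain ⟨C, D, hC, hD, hCD⟩ := ih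
    set ν : ℝ := ((n : ℝ) + 1) * β
    have hν : 0 < ν := by positivity
    refine ⟨C + D * ENNReal.ofReal (betaBound ν α * T ^ ν),
      D * B * ENNReal.ofReal (betaBound ν β),
      ENNReal.add_ne_top.2 ⟨hC, ENNReal.mul_ne_top hD ENNReal.ofReal_ne_top⟩,
      ENNReal.mul_ne_top (ENNReal.mul_ne_top hD ENNReal.coe_ne_top) ENNReal.ofReal_ne_top,
      fun a τ A ψ hψ hτ hbase t ht => ?_⟩
    have hexp : ((n + 1 : ℕ) + 1 : ℝ) * β = ν + β := by push_cast; ring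
    rw [hexp]
    exact le_add_rlIntegral_add_of_le hν hα hβ hψ hτ hbase (hCD a τ A ψ hψ hτ hbase) ht

end Iteration

lemma rlIntegral_le_of_one_le {γ a t T : ℝ} {f : ℝ → ℝ≥0∞} (hγ : 1 ≤ γ) (ht : t ≤ a + T) :
    rlIntegral γ a f t ≤ ENNReal.ofReal (T ^ (γ - 1)) * ∫⁻ r in Ioc a t, f r := by
  rw [rlIntegral, ← lintegral_const_mul' _ _ ENNReal.ofReal_ne_top]
  refine setLIntegral_mono' measurableSet_Ioc fun r hr => mul_le_mul_left ?_ _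
  exact ENNReal.ofReal_le_ofReal
    (Real.rpow_le_rpow (by linarith [hr.2]) (by linarith [hr.1]) (by linarith))

lemma lintegral_Ioc_exp_mul_sub_le {κ a u : ℝ} (hκ : 0 < κ) (hau : a ≤ u) :
    ∫⁻ r in Ioc a u, ENNReal.ofReal (Real.exp (κ * (r - a))) ≤
      ENNReal.ofReal κ⁻¹ * ENNReal.ofReal (Real.exp (κ * (u - a))) := by
  have hval : ∫ r in a..u, Real.exp (κ * (r - a)) = κ⁻¹ * (Real.exp (κ * (u - a)) - 1) := by
    simp_rw [mul_sub]
    rw [intervalIntegral.integral_comp_mul_sub Real.exp hκ.ne', integral_exp, sub_self,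
      Real.exp_zero, smul_eq_mul]
    ring
  rw [← ofReal_integral_eq_lintegral_ofReal, ← intervalIntegral.integral_of_le hau, hval,
    ← ENNReal.ofReal_mul (by positivity)]
  · exact ENNReal.ofReal_le_ofReal (by gcongr; linarith)
  · exact Continuous.integrableOn_Ioc (by fun_prop)
  · exact ae_of_all _ fun r => (Real.exp_pos _).le

lemma le_two_mul_of_le_add_half {M c : ℝ≥0∞} (hM : M ≠ ∞) (h : M ≤ c + M / 2) : M ≤ 2 * c := by
  have : M / 2 ≤ c := ENNReal.le_of_add_le_add_right (ENNReal.div_ne_top hM two_ne_zero)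
    (by rwa [ENNReal.add_halves])
  rwa [ENNReal.div_le_iff' two_ne_zero ENNReal.ofNat_ne_top] at this

theorem le_two_mul_exp_of_le_add_mul_lintegral {F : ℝ → ℝ≥0∞} {c D : ℝ≥0∞} {a b κ : ℝ}
    (hκ : 0 < κ) (hD : D ≤ ENNReal.ofReal (κ / 2)) (hab : a < b)
    (hbdd : ⨆ u ∈ Ioc a b, F u ≠ ∞)
    (hF : ∀ u ∈ Ioc a b, F u ≤ c + D * ∫⁻ r in Ioc a u, F r) :
    F b ≤ 2 * c * ENNReal.ofReal (Real.exp (κ * (b - a))) := by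
  set w : ℝ → ℝ≥0∞ := fun u => ENNReal.ofReal (Real.exp (κ * (u - a)))
  set w' : ℝ → ℝ≥0∞ := fun u => ENNReal.ofReal (Real.exp (-(κ * (u - a))))
  have hw'w : ∀ u, w' u * w u = 1 := fun u => by
    rw [← ENNReal.ofReal_mul (Real.exp_pos _).le, ← Real.exp_add, neg_add_cancel, Real.exp_zero,
      ENNReal.ofReal_one]
  have hw'_le : ∀ u ∈ Ioc a b, w' u ≤ 1 := fun u hu =>
    ENNReal.ofReal_le_one.2 (Real.exp_le_one_iff.2 (by nlinarith [hu.1]))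
  have hDκ : D * ENNReal.ofReal κ⁻¹ ≤ 2⁻¹ :=
    calc D * ENNReal.ofReal κ⁻¹ ≤ ENNReal.ofReal (κ / 2) * ENNReal.ofReal κ⁻¹ := by gcongr
      _ = 2⁻¹ := by
        rw [← ENNReal.ofReal_mul (by positivity), show κ / 2 * κ⁻¹ = 2⁻¹ by field_simp,
          ENNReal.ofReal_inv_of_pos two_pos, ENNReal.ofReal_ofNat]
  set M := ⨆ u ∈ Ioc a b, F u * w' u
  have hM : M ≠ ∞ :=
    ne_top_of_le_ne_top hbdd (iSup₂_mono fun u hu => mul_le_of_le_one_right' (hw'_le u hu))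
  have hFM : ∀ u ∈ Ioc a b, F u ≤ M * w u := fun u hu =>
    calc F u = F u * w' u * w u := by rw [mul_assoc, hw'w, mul_one]
      _ ≤ M * w u := mul_le_mul_left (le_iSup₂ (f := fun u _ => F u * w' u) u hu) _
  have hMle : M ≤ c + M / 2 := iSup₂_le fun u hu =>
    calc F u * w' u ≤ (c + D * (M * (ENNReal.ofReal κ⁻¹ * w u))) * w' u := by
          gcongr
          refine (hF u hu).trans ?_
          gcongr
          calc ∫⁻ r in Ioc a u, F r ≤ ∫⁻ r in Ioc a u, M * w r :=
                setLIntegral_mono' measurableSet_Ioc fun r hr => hFM r ⟨hr.1, hr.2.trans hu.2⟩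
            _ = M * ∫⁻ r in Ioc a u, w r := lintegral_const_mul' _ _ hM
            _ ≤ M * (ENNReal.ofReal κ⁻¹ * w u) := by
                gcongr; exact lintegral_Ioc_exp_mul_sub_le hκ hu.1.le
      _ = c * w' u + M * (D * ENNReal.ofReal κ⁻¹) * (w' u * w u) := by ring
      _ = c * w' u + M * (D * ENNReal.ofReal κ⁻¹) := by rw [hw'w, mul_one]
      _ ≤ c + M / 2 := by
          rw [div_eq_mul_inv]
          gcongr
          exact mul_le_of_le_one_right' (hw'_le u hu)
  calc F b ≤ M * w b := hFM b ⟨hab, le_rfl⟩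
    _ ≤ 2 * c * w b := by gcongr; exact le_two_mul_of_le_add_half hM hMle

section Bounded

variable {α T a τ : ℝ} {A D : ℝ≥0∞} {ψ : ℝ → ℝ≥0∞}

lemma lintegral_Ioc_le_add_mul_lintegral (hα : 0 < α) (hD : D ≠ ∞)
    (h : ∀ t ∈ Ioc a τ,
      ψ t ≤ A * ENNReal.ofReal ((t - a) ^ (α - 1)) + D * ∫⁻ r in Ioc a t, ψ r)
    {u : ℝ} (hu : u ∈ Ioc a τ) :
    ∫⁻ r in Ioc a u, ψ r ≤
      A * ENNReal.ofReal ((u - a) ^ α / α) + D * ∫⁻ r in Ioc a u, ∫⁻ v in Ioc a r, ψ v := by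
  calc ∫⁻ r in Ioc a u, ψ r
      ≤ ∫⁻ r in Ioc a u,
          (A * ENNReal.ofReal ((r - a) ^ (α - 1)) + D * ∫⁻ v in Ioc a r, ψ v) :=
        setLIntegral_mono' measurableSet_Ioc fun r hr => h r ⟨hr.1, hr.2.trans hu.2⟩
    _ = _ := by
        rw [lintegral_add_left (by fun_prop), lintegral_const_mul _ (by fun_prop),
          lintegral_const_mul' _ _ hD, lintegral_Ioc_rpow_sub_left hα hu.1.le]

lemma le_mul_rpow_of_le_add_mul_lintegral (hα : 0 < α) (hD : D ≠ ∞) (hτ : τ ≤ a + T)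
    (hfin : ∫⁻ r in Ioc a τ, ψ r ≠ ∞)
    (h : ∀ t ∈ Ioc a τ,
      ψ t ≤ A * ENNReal.ofReal ((t - a) ^ (α - 1)) + D * ∫⁻ r in Ioc a t, ψ r)
    {t : ℝ} (ht : t ∈ Ioc a τ) :
    ψ t ≤ (1 + 2 * D * ENNReal.ofReal (T / α * Real.exp ((2 * D.toReal + 2) * T))) * A *
      ENNReal.ofReal ((t - a) ^ (α - 1)) := by
  set κ := 2 * D.toReal + 2
  have hκ : 0 < κ := by positivity
  have hDκ : D ≤ ENNReal.ofReal (κ / 2) := by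
    calc D = ENNReal.ofReal D.toReal := (ENNReal.ofReal_toReal hD).symm
      _ ≤ ENNReal.ofReal (κ / 2) := ENNReal.ofReal_le_ofReal (by linarith)
  have hx : 0 < t - a := sub_pos.2 ht.1
  have hxT : t - a ≤ T := by linarith [ht.2]
  have hT : 0 ≤ T := hx.le.trans hxT
  have hF : ∀ u ∈ Ioc a t, ∫⁻ r in Ioc a u, ψ r ≤
      A * ENNReal.ofReal ((t - a) ^ α / α) + D * ∫⁻ r in Ioc a u, ∫⁻ v in Ioc a r, ψ v :=
    fun u hu => (lintegral_Ioc_le_add_mul_lintegral hα hD h ⟨hu.1, hu.2.trans ht.2⟩).trans <| by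
      gcongr
      exacts [sub_nonneg.2 hu.1.le, hu.2]
  have hbdd : ⨆ u ∈ Ioc a t, ∫⁻ r in Ioc a u, ψ r ≠ ∞ := ne_top_of_le_ne_top hfin <|
    iSup₂_le fun u hu => lintegral_mono_set (Ioc_subset_Ioc_right (hu.2.trans ht.2))
  have hreal : (t - a) ^ α / α * Real.exp (κ * (t - a)) ≤
      T / α * Real.exp (κ * T) * (t - a) ^ (α - 1) := by
    have hpow : (t - a) ^ α ≤ T * (t - a) ^ (α - 1) := by
      simpa using rpow_add_sub_one_le α hx hxT zero_le_one
    calc (t - a) ^ α / α * Real.exp (κ * (t - a))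
        ≤ T * (t - a) ^ (α - 1) / α * Real.exp (κ * T) := by gcongr
      _ = _ := by ring
  calc ψ t ≤ A * ENNReal.ofReal ((t - a) ^ (α - 1)) + D * ∫⁻ r in Ioc a t, ψ r := h t ht
    _ ≤ A * ENNReal.ofReal ((t - a) ^ (α - 1)) +
          D * (2 * A * ENNReal.ofReal ((t - a) ^ α / α * Real.exp (κ * (t - a)))) := by
        gcongr
        refine (le_two_mul_exp_of_le_add_mul_lintegral hκ hDκ ht.1 hbdd hF).trans_eq ?_
        rw [ENNReal.ofReal_mul (by positivity)]
        ring
    _ ≤ A * ENNReal.ofReal ((t - a) ^ (α - 1)) +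
          D * (2 * A * ENNReal.ofReal (T / α * Real.exp (κ * T) * (t - a) ^ (α - 1))) := by
        gcongr
    _ = _ := by
        rw [ENNReal.ofReal_mul (by positivity)]
        ring

end Bounded

theorem exists_le_mul_rpow_of_le_add_rlIntegral {α β T : ℝ} {B : ℝ≥0} (hα : 0 < α)
    (hβ : 0 < β) :
    ∃ C : ℝ≥0∞, C ≠ ∞ ∧ ∀ (a τ : ℝ) (A : ℝ≥0∞) (ψ : ℝ → ℝ≥0∞),
      Measurable ψ → τ ≤ a + T → ∫⁻ r in Ioc a τ, ψ r ≠ ∞ →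
      (∀ t ∈ Ioc a τ, ψ t ≤ A * ENNReal.ofReal ((t - a) ^ (α - 1)) + B * rlIntegral β a ψ t) →
      ∀ t ∈ Ioc a τ, ψ t ≤ C * A * ENNReal.ofReal ((t - a) ^ (α - 1)) := by
  obtain ⟨n, hn⟩ := exists_nat_ge β⁻¹
  have hν : 1 ≤ ((n : ℝ) + 1) * β := by
    have := (inv_le_iff_one_le_mul₀ hβ).1 hn
    nlinarith
  obtain ⟨C, D, hC, hD, hCD⟩ := exists_le_mul_rpow_add_rlIntegral (T := T) (B := B) hα hβ n
  set D' := D * ENNReal.ofReal (T ^ (((n : ℝ) + 1) * β - 1))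
  have hD' : D' ≠ ∞ := ENNReal.mul_ne_top hD ENNReal.ofReal_ne_top
  refine ⟨(1 + 2 * D' * ENNReal.ofReal (T / α * Real.exp ((2 * D'.toReal + 2) * T))) * C,
    ENNReal.mul_ne_top (ENNReal.add_ne_top.2 ⟨ENNReal.one_ne_top,
      ENNReal.mul_ne_top (ENNReal.mul_ne_top ENNReal.ofNat_ne_top hD') ENNReal.ofReal_ne_top⟩) hC,
    fun a τ A ψ hψ hτ hfin hbase t ht => ?_⟩
  have hbounded : ∀ t ∈ Ioc a τ,
      ψ t ≤ C * A * ENNReal.ofReal ((t - a) ^ (α - 1)) + D' * ∫⁻ r in Ioc a t, ψ r :=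
    fun t ht => (hCD a τ A ψ hψ hτ hbase t ht).trans <| by
      rw [mul_assoc D]
      gcongr
      exact rlIntegral_le_of_one_le hν (ht.2.trans hτ)
  calc ψ t ≤ _ := le_mul_rpow_of_le_add_mul_lintegral hα hD' hτ hfin hbounded ht
    _ = _ := by ring

lemma ofReal_intervalIntegral_le_lintegral {f : ℝ → ℝ} {a b : ℝ} (hab : a ≤ b)
    (hf : ∀ r ∈ Ioc a b, 0 ≤ f r) :
    ENNReal.ofReal (∫ r in a..b, f r) ≤ ∫⁻ r in Ioc a b, ENNReal.ofReal (f r) := by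
  rw [intervalIntegral.integral_of_le hab]
  calc ENNReal.ofReal (∫ r in Ioc a b, f r) ≤ ‖∫ r in Ioc a b, f r‖ₑ := Real.ofReal_le_enorm _
    _ ≤ ∫⁻ r in Ioc a b, ‖f r‖ₑ := enorm_integral_le_lintegral_enorm _
    _ = _ := setLIntegral_congr_fun measurableSet_Ioc fun r hr => Real.enorm_eq_ofReal (hf r hr)

lemma ofReal_le_add_rlIntegral_of_le {f : ℝ → ℝ} {y A x B β a t : ℝ} (hA : 0 ≤ A)
    (hat : a ≤ t) (hf : ∀ r, 0 ≤ f r)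
    (h : y ≤ A * x + B * ∫ r in a..t, (t - r) ^ (β - 1) * f r) :
    ENNReal.ofReal y ≤ ENNReal.ofReal A * ENNReal.ofReal x +
      ENNReal.ofReal B * rlIntegral β a (fun r => ENNReal.ofReal (f r)) t := by
  have hk : ∀ r ∈ Ioc a t, 0 ≤ (t - r) ^ (β - 1) :=
    fun r hr => Real.rpow_nonneg (sub_nonneg.2 hr.2) _
  refine (ENNReal.ofReal_le_ofReal h).trans <| ENNReal.ofReal_add_le.trans ?_
  rw [ENNReal.ofReal_mul hA, ENNReal.ofReal_mul' (intervalIntegral.integral_nonneg hat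
    fun r hr => mul_nonneg (Real.rpow_nonneg (sub_nonneg.2 hr.2) _) (hf r))]
  gcongr
  refine (ofReal_intervalIntegral_le_lintegral hat fun r hr =>
    mul_nonneg (hk r hr) (hf r)).trans_eq ?_
  exact setLIntegral_congr_fun measurableSet_Ioc fun r hr => ENNReal.ofReal_mul (hk r hr)

end Gronwall

theorem generalized_gronwall_general (T B α β : ℝ)
    (hα : 0 < α) (hβ : 0 < β) :
    ∃ C : ℝ, 0 ≤ C ∧ ∀ (A : ℝ) (φ : ℝ → ℝ → ℝ), 0 ≤ A →
      (∀ t s, 0 ≤ φ t s) →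
      Measurable (fun p : ℝ × ℝ => φ p.1 p.2) →
      (∀ s, 0 ≤ s → s ≤ T → IntervalIntegrable (fun r => φ r s) volume s T) →
      (∀ s t, 0 ≤ s → s ≤ t → t ≤ T →
        φ t s ≤ A * (t - s) ^ (α - 1) + B * ∫ r in s..t, (t - r) ^ (β - 1) * φ r s) →
      ∀ s t, 0 ≤ s → s ≤ t → t ≤ T → φ t s ≤ C * A * (t - s) ^ (α - 1) := by
  obtain ⟨C, hC, hCψ⟩ :=
    Gronwall.exists_le_mul_rpow_of_le_add_rlIntegral (T := T) (B := B.toNNReal) hα hβ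
  refine ⟨C.toReal + 1, by positivity, fun A φ hA hφ0 hφm hφi hφ s t hs hst htT => ?_⟩
  have hk : 0 ≤ A * (t - s) ^ (α - 1) := mul_nonneg hA (Real.rpow_nonneg (sub_nonneg.2 hst) _)
  rw [add_mul, add_mul, one_mul]
  rcases hst.eq_or_lt with rfl | hst
  · have h := hφ s s hs le_rfl htT
    rw [intervalIntegral.integral_same, mul_zero, add_zero] at h
    exact h.trans (le_add_of_nonneg_left (by positivity))
  have hψ := hCψ s T (ENNReal.ofReal A) (fun r => ENNReal.ofReal (φ r s))
    (hφm.comp (measurable_id.prodMk measurable_const)).ennreal_ofReal (by linarith)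
    (hφi s hs (hst.le.trans htT)).1.lintegral_lt_top.ne
    (fun t ht => Gronwall.ofReal_le_add_rlIntegral_of_le hA ht.1.le (fun r => hφ0 r s)
      (hφ s t hs ht.1.le ht.2)) t ⟨hst, htT⟩
  rw [← ENNReal.ofReal_toReal hC, ← ENNReal.ofReal_mul ENNReal.toReal_nonneg,
    ← ENNReal.ofReal_mul (by positivity), ENNReal.ofReal_le_ofReal_iff (by positivity)] at hψ
  exact hψ.trans (le_add_of_nonneg_right hk)

/-- Generalized Gronwall lemma with weakly singular kernel. -/
theorem generalized_gronwall (T B α β : ℝ) (hT : 0 < T) (hB : 0 ≤ B)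
    (hα : 0 < α) (hβ : 0 < β) :
    ∃ C : ℝ, 0 ≤ C ∧ ∀ (A : ℝ) (φ : ℝ → ℝ → ℝ), 0 ≤ A →
      (∀ t s, 0 ≤ φ t s) →
      Measurable (fun p : ℝ × ℝ => φ p.1 p.2) →
      (∀ s, 0 ≤ s → s ≤ T → IntervalIntegrable (fun r => φ r s) volume s T) →
      (∀ s t, 0 ≤ s → s ≤ t → t ≤ T →
        φ t s ≤ A * (t - s) ^ (α - 1) + B * ∫ r in s..t, (t - r) ^ (β - 1) * φ r s) →
      ∀ s t, 0 ≤ s → s ≤ t → t ≤ T → φ t s ≤ C * A * (t - s) ^ (α - 1) :=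
  generalized_gronwall_general T B α β hα hβ
end

section
/- Let T ∈ (0,∞), k ∈ (0,1), and M ∈ ℕ with M k ≤ T < (M+1) k; set t_m := m k. Let (φ_i)_{i=0}^M be nonnegative reals satisfying φ_m ≤ A + B k ∑_{i=0}^{m-1} t_{m-i}^{β-1} φ_i for all m ∈ {0,…,M}, for some constants A, B ∈ [0,∞) and β ∈ (0,1]. Then there exists a constant C = C(B,T,β) ∈ [0,∞), independent of k, M, A and of the sequence, such that φ_m ≤ C A for all m ∈ {0,…,M}. -/
/-!
Split the kernel at a lag `d` depending only on `B` and `β`. Lags `t_n < d` carry total mass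
`k ∑ t_n ^ (β - 1) ≤ d ^ β / β` (telescope the concavity of `t ↦ t ^ β`), which is at most
`1 / (2B)` for `d` small, so this singular part is absorbed into half of the bound. On lags
`t_n ≥ d` the kernel is at most `d ^ (β - 1)`, and the classical discrete Gronwall argument gives
growth `(1 + 2 B k d ^ (β - 1)) ^ m ≤ exp (2 B d ^ (β - 1) T)`.
-/

open Finset Real

namespace WeaklySingular

theorem mul_rpow_sub_one_mul_sub_le_rpow_sub_rpow {β a b : ℝ} (hβ0 : 0 ≤ β) (hβ1 : β ≤ 1)
    (ha : 0 ≤ a) (hb : 0 < b) :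
    β * b ^ (β - 1) * (b - a) ≤ b ^ β - a ^ β := by
  have bernoulli : (1 + (a / b - 1)) ^ β ≤ 1 + β * (a / b - 1) :=
    rpow_one_add_le_one_add_mul_self (by linarith [div_nonneg ha hb.le]) hβ0 hβ1
  have hab_pow : a ^ β = (a / b) ^ β * b ^ β := by
    rw [← mul_rpow (div_nonneg ha hb.le) hb.le, div_mul_cancel₀ a hb.ne']
  have hb_pow : b ^ β = b ^ (β - 1) * b := by
    rw [← rpow_add_one hb.ne', sub_add_cancel]
  rw [add_sub_cancel] at bernoulli
  have key := mul_le_mul_of_nonneg_right bernoulli (rpow_nonneg hb.le β)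
  rw [← hab_pow, hb_pow] at key
  rw [hb_pow]
  field_simp at key
  nlinarith [key]

theorem mul_sum_rpow_sub_one_le_rpow {β k : ℝ} (hβ0 : 0 < β) (hβ1 : β ≤ 1) (hk : 0 < k)
    (N : ℕ) : β * (k * ∑ j ∈ range N, (((j + 1 : ℕ) : ℝ) * k) ^ (β - 1)) ≤ ((N : ℝ) * k) ^ β := by
  calc β * (k * ∑ j ∈ range N, (((j + 1 : ℕ) : ℝ) * k) ^ (β - 1))
      = ∑ j ∈ range N, β * (((j + 1 : ℕ) : ℝ) * k) ^ (β - 1) *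
          (((j + 1 : ℕ) : ℝ) * k - (j : ℝ) * k) := by
        rw [mul_sum, mul_sum]
        refine sum_congr rfl fun j _ => ?_
        push_cast
        ring
    _ ≤ ∑ j ∈ range N, ((((j + 1 : ℕ) : ℝ) * k) ^ β - ((j : ℝ) * k) ^ β) :=
        sum_le_sum fun j _ => mul_rpow_sub_one_mul_sub_le_rpow_sub_rpow hβ0.le hβ1
          (by positivity) (by positivity)
    _ = ((N : ℝ) * k) ^ β := by
        rw [sum_range_sub (fun j => ((j : ℝ) * k) ^ β)]
        simp [zero_rpow hβ0.ne']

theorem mul_sum_ite_rpow_sub_one_le_rpow {β k d : ℝ} (hβ0 : 0 < β) (hβ1 : β ≤ 1) (hk : 0 < k)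
    (hd : 0 ≤ d) (m : ℕ) :
    β * (k * ∑ j ∈ range m,
      if ((j + 1 : ℕ) : ℝ) * k < d then (((j + 1 : ℕ) : ℝ) * k) ^ (β - 1) else 0) ≤ d ^ β := by
  set N := ⌊d / k⌋₊
  have hN : (N : ℝ) * k ≤ d := (le_div_iff₀ hk).mp (Nat.floor_le (div_nonneg hd hk.le))
  have near_sub : (range m).filter (fun j => ((j + 1 : ℕ) : ℝ) * k < d) ⊆ range N := by
    intro j hj
    rw [mem_filter] at hj
    exact mem_range.mpr (Nat.le_floor ((le_div_iff₀ hk).mpr hj.2.le))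
  calc β * (k * ∑ j ∈ range m,
        if ((j + 1 : ℕ) : ℝ) * k < d then (((j + 1 : ℕ) : ℝ) * k) ^ (β - 1) else 0)
      ≤ β * (k * ∑ j ∈ range N, (((j + 1 : ℕ) : ℝ) * k) ^ (β - 1)) := by
        rw [← sum_filter]
        gcongr
    _ ≤ ((N : ℝ) * k) ^ β := mul_sum_rpow_sub_one_le_rpow hβ0 hβ1 hk N
    _ ≤ d ^ β := by gcongr

theorem rpow_le_ite_add_rpow {β d : ℝ} (hβ1 : β ≤ 1) (hd : 0 < d) (x : ℝ) :
    x ^ (β - 1) ≤ (if x < d then x ^ (β - 1) else 0) + d ^ (β - 1) := by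
  split_ifs with hx
  · linarith [rpow_nonneg hd.le (β - 1)]
  · rw [zero_add]
    exact rpow_le_rpow_of_nonpos hd (not_lt.mp hx) (by linarith)

theorem le_two_mul_one_add_pow_of_le_add_sum {A c : ℝ} {u w φ : ℕ → ℝ} {M : ℕ}
    (hA : 0 ≤ A) (hc : 0 ≤ c) (hu : ∀ n, 0 ≤ u n)
    (hu_sum : ∀ m, ∑ j ∈ range m, u (j + 1) ≤ 1 / 2) (hwu : ∀ n, w n ≤ u n + c)
    (hφ : ∀ i, 0 ≤ φ i) (h : ∀ m ≤ M, φ m ≤ A + ∑ i ∈ range m, w (m - i) * φ i) :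
    ∀ m ≤ M, φ m ≤ 2 * A * (1 + 2 * c) ^ m := by
  set g : ℕ → ℝ := fun i => 2 * A * (1 + 2 * c) ^ i
  intro m
  induction m using Nat.strong_induction_on with
  | _ m ih =>
    intro hm
    have g_mono : ∀ i ≤ m, g i ≤ g m := fun i hi => by
      simp only [g]
      gcongr
      linarith
    have g_geom : 2 * c * ∑ i ∈ range m, g i = g m - 2 * A := by
      simp only [g, ← mul_sum]
      linear_combination 2 * A * geom_sum_mul (1 + 2 * c) m
    have u_sum : ∑ i ∈ range m, u (m - i) ≤ 1 / 2 := by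
      rw [← sum_range_reflect]
      convert hu_sum m using 2 with i hi
      rw [mem_range] at hi
      congr 1
      omega
    calc φ m ≤ A + ∑ i ∈ range m, w (m - i) * φ i := h m hm
      _ ≤ A + ∑ i ∈ range m, (u (m - i) * g m + c * g i) := by
        gcongr with i hi
        have hi := mem_range.mp hi
        have hφg : φ i ≤ g i := ih i hi (by omega)
        calc w (m - i) * φ i ≤ (u (m - i) + c) * g i :=
              mul_le_mul (hwu _) hφg (hφ i) (add_nonneg (hu _) hc)
          _ ≤ u (m - i) * g m + c * g i := by
              nlinarith [mul_le_mul_of_nonneg_left (g_mono i hi.le) (hu (m - i))]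
      _ = A + (∑ i ∈ range m, u (m - i)) * g m + c * ∑ i ∈ range m, g i := by
        rw [sum_add_distrib, sum_mul, mul_sum, add_assoc]
      _ ≤ A + 1 / 2 * g m + c * ∑ i ∈ range m, g i := by
        gcongr
      _ = g m := by linear_combination g_geom / 2

theorem discrete_gronwall_general (T B β : ℝ) (hB : 0 ≤ B)
    (hβ0 : 0 < β) (hβ1 : β ≤ 1) :
    ∃ C : ℝ, 0 ≤ C ∧ ∀ (k : ℝ) (M : ℕ) (A : ℝ) (φ : ℕ → ℝ),
      0 < k → k < 1 → (M : ℝ) * k ≤ T → T < ((M : ℝ) + 1) * k → 0 ≤ A →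
      (∀ i, 0 ≤ φ i) →
      (∀ m, m ≤ M →
        φ m ≤ A + B * k * ∑ i ∈ Finset.range m, (((m - i : ℕ) : ℝ) * k) ^ (β - 1) * φ i) →
      ∀ m, m ≤ M → φ m ≤ C * A := by
  set d : ℝ := (β / (2 * B + 1)) ^ β⁻¹
  have hd : 0 < d := by positivity
  have hd_small : 2 * B * d ^ β ≤ β := by
    rw [rpow_inv_rpow (by positivity) hβ0.ne', mul_div_assoc', div_le_iff₀ (by positivity)]
    nlinarith
  refine ⟨2 * exp (2 * B * d ^ (β - 1) * T), by positivity, ?_⟩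
  intro k M A φ hk _ hMk _ hA hφ hrec m hm
  set c := B * k * d ^ (β - 1)
  have near_sum : ∀ m, ∑ j ∈ range m, B * k * (if ((j + 1 : ℕ) : ℝ) * k < d
      then (((j + 1 : ℕ) : ℝ) * k) ^ (β - 1) else 0) ≤ 1 / 2 := fun m => by
    have := mul_sum_ite_rpow_sub_one_le_rpow hβ0 hβ1 hk hd.le m
    rw [← mul_sum, mul_assoc]
    nlinarith
  have growth := le_two_mul_one_add_pow_of_le_add_sum (c := c)
    (u := fun n => B * k * if (n : ℝ) * k < d then ((n : ℝ) * k) ^ (β - 1) else 0)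
    (w := fun n => B * k * ((n : ℝ) * k) ^ (β - 1)) hA (by positivity)
    (fun n => by positivity) near_sum
    (fun n => by linear_combination (B * k) * rpow_le_ite_add_rpow hβ1 hd ((n : ℝ) * k))
    hφ (fun m hm => by simpa only [mul_sum, mul_assoc] using hrec m hm) m hm
  have hmk : (m : ℝ) * k ≤ T := le_trans (by gcongr) hMk
  calc φ m ≤ 2 * A * (1 + 2 * c) ^ m := growth
    _ ≤ 2 * A * exp (2 * c) ^ m := by gcongr; linarith [add_one_le_exp (2 * c)]
    _ = 2 * exp (2 * B * d ^ (β - 1) * (m * k)) * A := by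
      rw [← exp_nat_mul]; simp only [c]; ring_nf
    _ ≤ 2 * exp (2 * B * d ^ (β - 1) * T) * A := by gcongr

/-- Discrete Gronwall lemma with weakly singular kernel on a uniform grid. -/
theorem discrete_gronwall (T B β : ℝ) (hT : 0 < T) (hB : 0 ≤ B)
    (hβ0 : 0 < β) (hβ1 : β ≤ 1) :
    ∃ C : ℝ, 0 ≤ C ∧ ∀ (k : ℝ) (M : ℕ) (A : ℝ) (φ : ℕ → ℝ),
      0 < k → k < 1 → (M : ℝ) * k ≤ T → T < ((M : ℝ) + 1) * k → 0 ≤ A →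
      (∀ i, 0 ≤ φ i) →
      (∀ m, m ≤ M →
        φ m ≤ A + B * k * ∑ i ∈ Finset.range m, (((m - i : ℕ) : ℝ) * k) ^ (β - 1) * φ i) →
      ∀ m, m ≤ M → φ m ≤ C * A :=
  discrete_gronwall_general T B β hB hβ0 hβ1
end WeaklySingular
end
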